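/- The subgroup of PSL₂(ℤ) generated by the images of the four matrices BA⁻¹, A⁻¹B, B⁻¹A⁻¹B², and B⁻³ is a subgroup of Γ̄(2) of index 3 in Γ̄(2). -/

import Mathlib

/-- `SL(2, ℤ)`. -/
abbrev SL2Z := Matrix.SpecialLinearGroup (Fin 2) ℤ

/-- `PSL₂(ℤ)`, the quotient of `SL(2, ℤ)` by its center `{±I}`. -/
abbrev PSL2Z := SL2Z ⧸ Subgroup.center SL2Z

/-- The projection `SL(2, ℤ) → PSL₂(ℤ)`. -/
def projSL : SL2Z →* PSL2Z := QuotientGroup.mk' (Subgroup.center SL2Z)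

/-- `Γ̄(N)`, the image of the principal congruence subgroup `Γ(N)` in `PSL₂(ℤ)`. -/
def GammaBar (N : ℕ) : Subgroup PSL2Z := (CongruenceSubgroup.Gamma N).map projSL

/-- The matrix `A = [[1,2],[0,1]]` in `SL(2, ℤ)`. -/
def matA : SL2Z := ⟨!![1, 2; 0, 1], by norm_num [Matrix.det_fin_two_of]⟩

/-- The matrix `B = [[1,0],[2,1]]` in `SL(2, ℤ)`. -/
def matB : SL2Z := ⟨!![1, 0; 2, 1], by norm_num [Matrix.det_fin_two_of]⟩

/-- The matrix `T = [[1,1],[0,1]]` in `SL(2, ℤ)`. -/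
def matT : SL2Z := ⟨!![1, 1; 0, 1], by norm_num [Matrix.det_fin_two_of]⟩

/-- The matrix `L = [[1,0],[1,1]]` in `SL(2, ℤ)`. -/
def matL : SL2Z := ⟨!![1, 0; 1, 1], by norm_num [Matrix.det_fin_two_of]⟩

/-- `Ā`, the image of `A` in `PSL₂(ℤ)`. -/
def Abar : PSL2Z := projSL matA

/-- `B̄`, the image of `B` in `PSL₂(ℤ)`. -/
def Bbar : PSL2Z := projSL matB


/-!
`Ā` and `B̄` generate `Γ̄(2)`, by a Euclidean descent on the first column, and they generate it
freely, by ping-pong on the slopes of nonzero integer vectors (the centre `±1` does no harm since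
free groups are torsion-free). So the subgroup in question is the image of the subgroup `H` of the
free group on `x, y` generated by `yx⁻¹, x⁻¹y, y⁻¹x⁻¹y², y⁻³`. Its index is a multiple of 3, since
`H` lies in the kernel of the exponent sum modulo 3, and at most 3, since `x` and `y` permute the
cosets `H, yH, y²H`.
-/

open CongruenceSubgroup
open scoped Pointwise MatrixGroups

lemma coe_matA_zpow (k : ℤ) :
    ((matA ^ k : SL2Z) : Matrix (Fin 2) (Fin 2) ℤ) = !![1, 2 * k; 0, 1] := by
  have hT : matA = ModularGroup.T ^ 2 := by ext i j; fin_cases i <;> fin_cases j <;> rfl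
  rw [hT, ← zpow_natCast, ← zpow_mul, ModularGroup.coe_T_zpow]
  norm_num

lemma coe_matB_zpow (k : ℤ) :
    ((matB ^ k : SL2Z) : Matrix (Fin 2) (Fin 2) ℤ) = !![1, 0; 2 * k, 1] := by
  induction k with
  | zero => simp [Matrix.one_fin_two]
  | succ n ih =>
    rw [zpow_add_one, Matrix.SpecialLinearGroup.coe_mul, ih]
    simp [matB]; ring
  | pred n ih =>
    rw [zpow_sub_one, Matrix.SpecialLinearGroup.coe_mul, ih, Matrix.SpecialLinearGroup.coe_inv]
    simp [matB, Matrix.adjugate_fin_two]; ring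

lemma matA_zpow_smul (k : ℤ) (v : Fin 2 → ℤ) : matA ^ k • v = ![v 0 + 2 * k * v 1, v 1] := by
  rw [Matrix.SpecialLinearGroup.smul_def, Matrix.smul_eq_mulVec, coe_matA_zpow,
    Matrix.mulVec_fin_two]
  simp

lemma matB_zpow_smul (k : ℤ) (v : Fin 2 → ℤ) : matB ^ k • v = ![v 0, 2 * k * v 0 + v 1] := by
  rw [Matrix.SpecialLinearGroup.smul_def, Matrix.smul_eq_mulVec, coe_matB_zpow,
    Matrix.mulVec_fin_two]
  simp

lemma matA_zpow_mul_apply (k : ℤ) (M : SL2Z) :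
    (matA ^ k * M) 0 0 = M 0 0 + 2 * k * M 1 0 ∧ (matA ^ k * M) 1 0 = M 1 0 := by
  simp [coe_matA_zpow, Matrix.mul_apply, Fin.sum_univ_two]

lemma matB_zpow_mul_apply (k : ℤ) (M : SL2Z) :
    (matB ^ k * M) 0 0 = M 0 0 ∧ (matB ^ k * M) 1 0 = M 1 0 + 2 * k * M 0 0 := by
  simp [coe_matB_zpow, Matrix.mul_apply, Fin.sum_univ_two, add_comm]

lemma matA_mem_Gamma_two : matA ∈ Gamma 2 := by
  rw [Gamma_mem]; simp [matA]; decide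

lemma matB_mem_Gamma_two : matB ∈ Gamma 2 := by
  rw [Gamma_mem]; simp [matB]; decide

lemma emod_two_of_mem_Gamma_two {M : SL2Z} (hM : M ∈ Gamma 2) :
    M 0 0 % 2 = 1 ∧ M 0 1 % 2 = 0 ∧ M 1 0 % 2 = 0 := by
  obtain ⟨h00, h01, h10, -⟩ := Gamma_mem.1 hM
  refine ⟨?_, ?_, ?_⟩
  · simpa using (ZMod.intCast_eq_intCast_iff' (M 0 0) 1 2).1 (by simpa using h00)
  · simpa using (ZMod.intCast_eq_intCast_iff' (M 0 1) 0 2).1 (by simpa using h01)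
  · simpa using (ZMod.intCast_eq_intCast_iff' (M 1 0) 0 2).1 (by simpa using h10)

lemma Int.exists_natAbs_add_two_mul_lt {a c : ℤ} (ha : a % 2 = 1) (hc : c % 2 = 0) (hc0 : c ≠ 0) :
    (∃ k : ℤ, (a + 2 * k * c).natAbs < a.natAbs) ∨ ∃ k : ℤ, (c + 2 * k * a).natAbs < c.natAbs := by
  -- `k = -sign (a * c)` works for whichever of `a`, `c` is larger in absolute value
  rcases lt_or_gt_of_ne (show a.natAbs ≠ c.natAbs by omega) with h | h
  · exact .inr ⟨if (0 < a ↔ 0 < c) then -1 else 1, by split_ifs <;> omega⟩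
  · exact .inl ⟨if (0 < a ↔ 0 < c) then -1 else 1, by split_ifs <;> omega⟩

lemma mem_closure_of_mem_Gamma_two_of_apply_one_zero_eq_zero {M : SL2Z} (hM : M ∈ Gamma 2)
    (hc : M 1 0 = 0) : M ∈ Subgroup.closure {-1, matA, matB} := by
  have hA : matA ∈ Subgroup.closure {-1, matA, matB} := Subgroup.subset_closure (by simp)
  have hdet : M 0 0 * M 1 1 = 1 := by
    have := M.det_coe
    rwa [Matrix.det_fin_two, hc, mul_zero, sub_zero] at this
  obtain ⟨k, hk⟩ : 2 ∣ M 0 1 := Int.dvd_of_emod_eq_zero (emod_two_of_mem_Gamma_two hM).2.1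
  rcases Int.eq_one_or_neg_one_of_mul_eq_one' hdet with ⟨ha, hd⟩ | ⟨ha, hd⟩
  · have hM : M = matA ^ k := by
      ext i j; fin_cases i <;> fin_cases j <;> simp [coe_matA_zpow, ha, hd, hk, hc]
    exact hM ▸ zpow_mem hA k
  · have hM : M = -1 * matA ^ (-k) := by
      ext i j; fin_cases i <;> fin_cases j <;> simp [coe_matA_zpow, ha, hd, hk, hc]
    exact hM ▸ mul_mem (Subgroup.subset_closure (by simp)) (zpow_mem hA _)

lemma mem_closure_of_mem_Gamma_two {M : SL2Z} (hM : M ∈ Gamma 2) :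
    M ∈ Subgroup.closure {-1, matA, matB} := by
  obtain ⟨n, hn⟩ : ∃ n, (M 0 0).natAbs + (M 1 0).natAbs = n := ⟨_, rfl⟩
  induction n using Nat.strong_induction_on generalizing M with
  | _ n ih =>
  have step (P : SL2Z) (hP : P ∈ Subgroup.closure {-1, matA, matB}) (hPΓ : P ∈ Gamma 2)
      (hlt : ((P * M) 0 0).natAbs + ((P * M) 1 0).natAbs < n) :
      M ∈ Subgroup.closure {-1, matA, matB} :=
    (mul_mem_cancel_left hP).1 (ih _ hlt (mul_mem hPΓ hM) rfl)
  by_cases hc : M 1 0 = 0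
  · exact mem_closure_of_mem_Gamma_two_of_apply_one_zero_eq_zero hM hc
  obtain ⟨ha, -, hc2⟩ := emod_two_of_mem_Gamma_two hM
  rcases Int.exists_natAbs_add_two_mul_lt ha hc2 hc with ⟨k, hk⟩ | ⟨k, hk⟩
  · refine step _ (zpow_mem (Subgroup.subset_closure (by simp)) k)
      (zpow_mem matA_mem_Gamma_two k) ?_
    rw [(matA_zpow_mul_apply k M).1, (matA_zpow_mul_apply k M).2]
    omega
  · refine step _ (zpow_mem (Subgroup.subset_closure (by simp)) k)
      (zpow_mem matB_mem_Gamma_two k) ?_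
    rw [(matB_zpow_mul_apply k M).1, (matB_zpow_mul_apply k M).2]
    omega

theorem Gamma_two_eq_closure : Gamma 2 = Subgroup.closure {-1, matA, matB} := by
  refine le_antisymm (fun M => mem_closure_of_mem_Gamma_two) (Subgroup.closure_le _ |>.2 ?_)
  rintro _ (rfl | rfl | rfl)
  · rw [SetLike.mem_coe, Gamma_mem]; simp
  · exact matA_mem_Gamma_two
  · exact matB_mem_Gamma_two

lemma Matrix.SpecialLinearGroup.pow_card_eq_one_of_mem_center {n R : Type*} [Fintype n]
    [DecidableEq n] [CommRing R] {A : SpecialLinearGroup n R}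
    (hA : A ∈ Subgroup.center (SpecialLinearGroup n R)) : A ^ Fintype.card n = 1 := by
  obtain ⟨r, hr, hrA⟩ := mem_center_iff.1 hA
  ext : 1
  rw [coe_pow, ← hrA, ← map_pow, hr, map_one, coe_one]

lemma projSL_neg_one : projSL (-1) = 1 :=
  (QuotientGroup.eq_one_iff _).2 (Subgroup.mem_center_iff.2 fun g => by simp)

theorem GammaBar_two_eq_closure : GammaBar 2 = Subgroup.closure {Abar, Bbar} := by
  rw [GammaBar, Gamma_two_eq_closure, MonoidHom.map_closure, Set.image_insert_eq,
    Set.image_insert_eq, Set.image_singleton, projSL_neg_one, Subgroup.closure_insert_one]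
  rfl

def nonzeroSubMulAction (G M : Type*) [Group G] [AddMonoid M] [DistribMulAction G M] :
    SubMulAction G M where
  carrier := {v | v ≠ 0}
  smul_mem' g _ hv := (smul_ne_zero_iff_ne g).2 hv

@[simp]
lemma mem_nonzeroSubMulAction {G M : Type*} [Group G] [AddMonoid M] [DistribMulAction G M]
    {v : M} : v ∈ nonzeroSubMulAction G M ↔ v ≠ 0 := Iff.rfl

abbrev nonzeroVectors : SubMulAction SL2Z (Fin 2 → ℤ) := nonzeroSubMulAction SL2Z (Fin 2 → ℤ)

lemma mul_self_add_mul_self_pos_of_ne_zero {v : Fin 2 → ℤ} (hv : v ≠ 0) :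
    0 < v 0 * v 0 + v 1 * v 1 := by
  have h : v 0 ≠ 0 ∨ v 1 ≠ 0 := by
    by_contra! h
    exact hv (funext fun i => by fin_cases i <;> simp [h])
  rcases h with h | h
  · exact add_pos_of_pos_of_nonneg (mul_self_pos.2 h) (mul_self_nonneg _)
  · exact add_pos_of_nonneg_of_pos (mul_self_nonneg _) (mul_self_pos.2 h)

/- With `t = v 0 / v 1 ∈ ℚ ∪ {∞}`, the sets `pingPongX 0, pingPongY 0, pingPongX 1, pingPongY 1`
are `t ∈ [1, ∞]`, `t < -1`, `t ∈ [0, 1)` and `t ∈ [-1, 0)`; `A` and `B` act as `t ↦ t + 2` and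
`t ↦ t / (2t + 1)`. -/
def pingPongX : Fin 2 → Set nonzeroVectors
  | 0 => {v | v.1 1 * v.1 1 ≤ v.1 0 * v.1 1}
  | 1 => {v | 0 ≤ v.1 0 * v.1 1 ∧ v.1 0 * v.1 1 < v.1 1 * v.1 1}

def pingPongY : Fin 2 → Set nonzeroVectors
  | 0 => {v | v.1 0 * v.1 1 < -(v.1 1 * v.1 1)}
  | 1 => {v | -(v.1 1 * v.1 1) ≤ v.1 0 * v.1 1 ∧ v.1 0 * v.1 1 < 0}

lemma matA_smul_mem_pingPongX {v : nonzeroVectors} (hv : v ∉ pingPongY 0) :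
    matA • v ∈ pingPongX 0 := by
  have h := matA_zpow_smul 1 v.1
  simp only [pingPongX, pingPongY, Set.mem_ofPred_eq, not_lt] at hv ⊢
  simp only [SubMulAction.val_smul, zpow_one] at h ⊢
  simp only [h, Matrix.cons_val_zero, Matrix.cons_val_one]
  linarith

lemma matA_inv_smul_mem_pingPongY {v : nonzeroVectors} (hv : v ∉ pingPongX 0) :
    matA⁻¹ • v ∈ pingPongY 0 := by
  have h := matA_zpow_smul (-1) v.1
  simp only [pingPongX, pingPongY, Set.mem_ofPred_eq, not_le] at hv ⊢
  simp only [SubMulAction.val_smul, zpow_neg_one] at h ⊢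
  simp only [h, Matrix.cons_val_zero, Matrix.cons_val_one]
  linarith

lemma matB_smul_mem_pingPongX {v : nonzeroVectors} (hv : v ∉ pingPongY 1) :
    matB • v ∈ pingPongX 1 := by
  have h := matB_zpow_smul 1 v.1
  simp only [pingPongX, pingPongY, Set.mem_ofPred_eq, not_and, not_lt] at hv ⊢
  simp only [SubMulAction.val_smul, zpow_one] at h ⊢
  simp only [h, Matrix.cons_val_zero, Matrix.cons_val_one]
  have hpos := mul_self_add_mul_self_pos_of_ne_zero v.2
  generalize v.1 0 = x, v.1 1 = y at *
  rcases le_or_gt 0 (x * y) with hxy | hxy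
  · constructor <;> nlinarith
  · have h' : x * y < -(y * y) := not_le.1 fun hc => hxy.not_ge (hv hc)
    constructor <;> nlinarith [mul_self_nonneg (x + y), mul_self_nonneg (2 * x + y)]

lemma matB_inv_smul_mem_pingPongY {v : nonzeroVectors} (hv : v ∉ pingPongX 1) :
    matB⁻¹ • v ∈ pingPongY 1 := by
  have h := matB_zpow_smul (-1) v.1
  simp only [pingPongX, pingPongY, Set.mem_ofPred_eq, not_and, not_lt] at hv ⊢
  simp only [SubMulAction.val_smul, zpow_neg_one] at h ⊢
  simp only [h, Matrix.cons_val_zero, Matrix.cons_val_one]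
  have hpos := mul_self_add_mul_self_pos_of_ne_zero v.2
  generalize v.1 0 = x, v.1 1 = y at *
  rcases le_or_gt 0 (x * y) with hxy | hxy
  · have h' := hv hxy
    constructor <;> nlinarith [mul_self_nonneg (x - y), mul_self_nonneg (2 * x - y)]
  · constructor <;> nlinarith

lemma injective_lift_matA_matB : Function.Injective (FreeGroup.lift ![matA, matB]) := by
  have disjoint_of {s t : Set nonzeroVectors} (h : ∀ v ∈ s, v ∈ t → v.1 1 * v.1 1 < 0) :
      Disjoint s t :=
    Set.disjoint_left.2 fun v hs ht => (h v hs ht).not_ge (mul_self_nonneg _)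
  refine FreeGroup.injective_lift_of_ping_pong _ pingPongX pingPongY ?_ ?_ ?_ ?_ ?_ ?_
  · intro i
    fin_cases i
    · exact ⟨⟨![1, 0], by simp⟩, by simp [pingPongX]⟩
    · exact ⟨⟨![0, 1], by simp⟩, by simp [pingPongX]⟩
  · intro i j hij
    fin_cases i <;> fin_cases j <;> simp only [ne_eq, not_true_eq_false] at hij <;>
      refine disjoint_of fun v h1 h2 => ?_ <;>
      simp only [pingPongX, Set.mem_ofPred_eq] at h1 h2 <;> linarith
  · intro i j hij
    fin_cases i <;> fin_cases j <;> simp only [ne_eq, not_true_eq_false] at hij <;>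
      refine disjoint_of fun v h1 h2 => ?_ <;>
      simp only [pingPongY, Set.mem_ofPred_eq] at h1 h2 <;> linarith
  · intro i j
    fin_cases i <;> fin_cases j <;>
      refine disjoint_of fun v h1 h2 => ?_ <;>
      simp only [pingPongX, pingPongY, Set.mem_ofPred_eq] at h1 h2 <;> linarith
  all_goals intro i; fin_cases i <;> refine Set.smul_set_subset_iff.2 fun v hv => ?_
  exacts [matA_smul_mem_pingPongX hv, matB_smul_mem_pingPongX hv,
    matA_inv_smul_mem_pingPongY hv, matB_inv_smul_mem_pingPongY hv]

lemma injective_lift_Abar_Bbar : Function.Injective (FreeGroup.lift ![Abar, Bbar]) := by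
  have hlift : FreeGroup.lift ![Abar, Bbar] = projSL.comp (FreeGroup.lift ![matA, matB]) := by
    ext i
    fin_cases i <;> rfl
  refine (injective_iff_map_eq_one _).2 fun w hw => ?_
  rw [hlift, MonoidHom.comp_apply, projSL, QuotientGroup.mk'_apply,
    QuotientGroup.eq_one_iff] at hw
  have hsq := Matrix.SpecialLinearGroup.pow_card_eq_one_of_mem_center hw
  rw [Fintype.card_fin, ← map_pow, ← map_one (FreeGroup.lift ![matA, matB])] at hsq
  exact sq_eq_one.1 (injective_lift_matA_matB hsq)

theorem Subgroup.index_eq_ncard_of_smul_subset {G : Type*} [Group G] {H : Subgroup G}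
    {S : Set G} (hS : closure S = ⊤) {U : Set (G ⧸ H)} (hU : U.Finite)
    (h1 : ((1 : G) : G ⧸ H) ∈ U) (hSU : ∀ s ∈ S, s • U ⊆ U) : H.index = U.ncard := by
  have hstab : closure S ≤ MulAction.stabilizer G U :=
    (closure_le _).2 fun s hs => (MulAction.mem_stabilizer_set_iff_smul_set_subset hU).2 (hSU s hs)
  have hUniv : U = Set.univ := by
    refine Set.eq_univ_of_forall fun q => QuotientGroup.induction_on q fun g => ?_
    have hgU := Set.smul_mem_smul_set (a := g) h1
    rwa [hstab (hS ▸ mem_top g), MulAction.Quotient.smul_coe, smul_eq_mul, mul_one] at hgU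
  rw [index_eq_card, ← Set.ncard_univ, hUniv]

def threeStarSubgroup : Subgroup (FreeGroup (Fin 2)) :=
  Subgroup.closure {FreeGroup.of 1 * (FreeGroup.of 0)⁻¹, (FreeGroup.of 0)⁻¹ * FreeGroup.of 1,
    (FreeGroup.of 1)⁻¹ * (FreeGroup.of 0)⁻¹ * FreeGroup.of 1 ^ 2, (FreeGroup.of 1)⁻¹ ^ 3}

theorem three_dvd_index_threeStarSubgroup : 3 ∣ threeStarSubgroup.index := by
  let φ : FreeGroup (Fin 2) →* Multiplicative (ZMod 3) := FreeGroup.lift fun _ => .ofAdd 1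
  have hle : threeStarSubgroup ≤ φ.ker := by
    rw [threeStarSubgroup, Subgroup.closure_le]
    rintro w (rfl | rfl | rfl | rfl) <;>
      simp only [SetLike.mem_coe, MonoidHom.mem_ker, map_mul, map_inv, map_pow, φ,
        FreeGroup.lift_apply_of] <;>
      decide
  have hφ : Function.Surjective φ := fun z =>
    ⟨FreeGroup.of 0 ^ z.toAdd.val, by simp [φ, ← ofAdd_nsmul]⟩
  have hdvd := Subgroup.index_dvd_of_le hle
  rwa [Subgroup.index_ker, φ.range_eq_top_of_surjective hφ, Subgroup.card_top,
    Nat.card_eq_fintype_card] at hdvd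

def threeStarCosets : Set (FreeGroup (Fin 2) ⧸ threeStarSubgroup) :=
  {↑(1 : FreeGroup (Fin 2)), ↑(FreeGroup.of (1 : Fin 2)), ↑(FreeGroup.of (1 : Fin 2) ^ 2)}

lemma of_smul_threeStarCosets_subset :
    ∀ i : Fin 2, FreeGroup.of i • threeStarCosets ⊆ threeStarCosets := by
  rw [Fin.forall_fin_two, threeStarCosets]
  set x := FreeGroup.of (0 : Fin 2)
  set y := FreeGroup.of (1 : Fin 2)
  have hgen : ∀ g ∈ ({y * x⁻¹, x⁻¹ * y, y⁻¹ * x⁻¹ * y ^ 2, y⁻¹ ^ 3} : Set _),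
      g ∈ threeStarSubgroup := fun g hg => Subgroup.subset_closure hg
  have hcoset (a b w : FreeGroup (Fin 2)) (hw : w ∈ threeStarSubgroup) (h : a⁻¹ * b = w) :
      (a : FreeGroup (Fin 2) ⧸ threeStarSubgroup) = b :=
    QuotientGroup.eq.2 (h ▸ hw)
  refine ⟨?_, ?_⟩ <;> rw [Set.smul_set_subset_iff] <;> rintro _ (rfl | rfl | rfl) <;>
    rw [MulAction.Quotient.smul_coe, smul_eq_mul]
  · exact .inr (.inl (hcoset _ _ _ (hgen (x⁻¹ * y) (by simp)) (by group)))
  · exact .inr (.inr (hcoset _ _ _ (hgen (y⁻¹ * x⁻¹ * y ^ 2) (by simp)) (by group)))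
  · exact .inl (hcoset _ _ (y⁻¹ ^ 3 * (y * x⁻¹))
      (mul_mem (hgen _ (by simp)) (hgen _ (by simp))) (by group))
  · exact .inr (.inl (by rw [mul_one]))
  · exact .inr (.inr (by rw [pow_two]; rfl))
  · exact .inl (hcoset _ _ _ (hgen (y⁻¹ ^ 3) (by simp)) (by group))

theorem index_threeStarSubgroup : threeStarSubgroup.index = 3 := by
  have hfin : threeStarCosets.Finite := by simp [threeStarCosets]
  have hidx := Subgroup.index_eq_ncard_of_smul_subset (FreeGroup.closure_range_of _)
    hfin (Set.mem_insert _ _)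
    (Set.forall_mem_range.2 of_smul_threeStarCosets_subset)
  have hle : threeStarCosets.ncard ≤ 3 := (Set.ncard_insert_le _ _).trans
    (Nat.succ_le_succ ((Set.ncard_insert_le _ _).trans (by simp)))
  have hpos : 0 < threeStarCosets.ncard :=
    (Set.ncard_pos hfin).2 ⟨_, Set.mem_insert _ _⟩
  have := three_dvd_index_threeStarSubgroup
  omega

/-- The group of the 3-star graph: `⟨BA⁻¹, A⁻¹B, B⁻¹A⁻¹B², B⁻³⟩` is a subgroup of `Γ̄(2)`
of index 3 in `Γ̄(2)`. -/
theorem three_star_index_three :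
    Subgroup.closure ({Bbar * Abar⁻¹, Abar⁻¹ * Bbar, Bbar⁻¹ * Abar⁻¹ * Bbar ^ 2,
        Bbar⁻¹ ^ 3} : Set PSL2Z) ≤ GammaBar 2 ∧
    (Subgroup.closure ({Bbar * Abar⁻¹, Abar⁻¹ * Bbar, Bbar⁻¹ * Abar⁻¹ * Bbar ^ 2,
        Bbar⁻¹ ^ 3} : Set PSL2Z)).relIndex (GammaBar 2) = 3 := by
  set f := FreeGroup.lift ![Abar, Bbar]
  have hH : Subgroup.closure ({Bbar * Abar⁻¹, Abar⁻¹ * Bbar, Bbar⁻¹ * Abar⁻¹ * Bbar ^ 2,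
      Bbar⁻¹ ^ 3} : Set PSL2Z) = threeStarSubgroup.map f := by
    simp [threeStarSubgroup, MonoidHom.map_closure, Set.image_insert_eq, f]
  have hΓ : GammaBar 2 = (⊤ : Subgroup _).map f := by
    rw [← MonoidHom.range_eq_map, FreeGroup.range_lift_eq_closure, GammaBar_two_eq_closure,
      Set.pair_comm]
    simp
  rw [hH, hΓ, Subgroup.relIndex_map_map_of_injective _ _ injective_lift_Abar_Bbar,
    Subgroup.relIndex_top_right]
  exact ⟨Subgroup.map_mono le_top, index_threeStarSubgroup⟩
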